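/- The Jaccard distance d(A,B) = 1 - |A ∩ B| / |A ∪ B| on finite subsets of a type satisfies the triangle inequality: d(A,C) ≤ d(A,B) + d(B,C). -/

import Mathlib

/-!
Write `d(A, B) = |A ∆ B| / |A ∪ B|`. Over the common denominator `|A ∪ B ∪ C|` the two right-hand
distances only shrink, and `|A ∪ B ∪ C| = |A ∪ C| + m` with `m = |B \ (A ∪ C)|`. Every element of
`B \ (A ∪ C)` lies in both `A ∆ B` and `B ∆ C`, so the numerators gain `2m` over `|A ∆ C|` while the
denominator gains only `m`, and `x / u ≤ (x + 2m) / (u + m)` whenever `x ≤ u`.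
-/

open Finset

/-- Jaccard similarity of finite sets, with the convention `jaccard ∅ ∅ = 1`. -/
noncomputable def jaccard {α : Type*} [DecidableEq α] (A B : Finset α) : ℝ :=
  if A ∪ B = ∅ then 1 else ((A ∩ B).card : ℝ) / ((A ∪ B).card : ℝ)

/-- The Jaccard distance `d(A,B) = 1 - jaccard A B`. -/
noncomputable def jaccardDist {α : Type*} [DecidableEq α] (A B : Finset α) : ℝ :=
  1 - jaccard A B

open scoped symmDiff

lemma div_le_add_two_mul_div_add {x u m : ℝ} (hx : 0 ≤ x) (hxu : x ≤ u) (hm : 0 ≤ m) :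
    x / u ≤ (x + 2 * m) / (u + m) := by
  rcases (hx.trans hxu).eq_or_lt with hu | hu
  · rw [← hu, div_zero]
    positivity
  · rw [div_le_div_iff₀ hu (by positivity)]
    nlinarith [mul_le_mul_of_nonneg_left hxu hm]

section

variable {α : Type*} [DecidableEq α]

-- Holds also for `A = B = ∅`, where the right-hand side is the junk value `0 / 0 = 0`.
lemma jaccardDist_eq_card_symmDiff_div (A B : Finset α) :
    jaccardDist A B = #(A ∆ B) / #(A ∪ B) := by
  have hcard : (#(A ∆ B) : ℝ) + #(A ∩ B) = #(A ∪ B) := by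
    rw [symmDiff_eq_sup_sdiff_inf]
    exact_mod_cast card_sdiff_add_card_eq_card inter_subset_union
  unfold jaccardDist jaccard
  split_ifs with h
  · simp [h]
  · have hpos : (0 : ℝ) < #(A ∪ B) := by simpa [nonempty_iff_ne_empty] using h
    rw [← hcard] at hpos ⊢
    field_simp
    ring

lemma card_symmDiff_div_le_jaccardDist {A B U : Finset α} (h : A ∪ B ⊆ U) :
    #(A ∆ B) / #U ≤ jaccardDist A B := by
  rw [jaccardDist_eq_card_symmDiff_div]
  rcases (A ∪ B).eq_empty_or_nonempty with hAB | hAB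
  · simp [union_eq_empty.mp hAB]
  · exact div_le_div_of_nonneg_left (by positivity) (by simpa using hAB) (mod_cast card_le_card h)

lemma card_symmDiff_add_two_mul_card_sdiff_le (A B C : Finset α) :
    #(A ∆ C) + 2 * #(B \ (A ∪ C)) ≤ #(A ∆ B) + #(B ∆ C) := by
  have hdisj : Disjoint (A ∆ C) (B \ (A ∪ C)) := by
    rw [disjoint_left]
    simp only [mem_symmDiff, mem_sdiff, mem_union]
    tauto
  have hunion : A ∆ C ∪ B \ (A ∪ C) ⊆ A ∆ B ∪ B ∆ C := by
    intro x
    simp only [mem_union, mem_symmDiff, mem_sdiff]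
    tauto
  have hinter : B \ (A ∪ C) ⊆ A ∆ B ∩ B ∆ C := by
    intro x
    simp only [mem_inter, mem_symmDiff, mem_sdiff, mem_union]
    tauto
  calc #(A ∆ C) + 2 * #(B \ (A ∪ C))
      = #(A ∆ C ∪ B \ (A ∪ C)) + #(B \ (A ∪ C)) := by rw [card_union_of_disjoint hdisj]; ring
    _ ≤ #(A ∆ B ∪ B ∆ C) + #(A ∆ B ∩ B ∆ C) := add_le_add (card_le_card hunion) (card_le_card hinter)
    _ = #(A ∆ B) + #(B ∆ C) := card_union_add_card_inter _ _

end

/-- The Jaccard distance satisfies the triangle inequality. -/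
theorem jaccardDist_triangle {α : Type*} [DecidableEq α] (A B C : Finset α) :
    jaccardDist A C ≤ jaccardDist A B + jaccardDist B C := by
  set U := B ∪ (A ∪ C)
  have hU : (#U : ℝ) = #(A ∪ C) + #(B \ (A ∪ C)) := by
    rw [add_comm]; exact_mod_cast (card_sdiff_add_card B (A ∪ C)).symm
  have hnum : (#(A ∆ C) : ℝ) + 2 * #(B \ (A ∪ C)) ≤ #(A ∆ B) + #(B ∆ C) :=
    mod_cast card_symmDiff_add_two_mul_card_sdiff_le A B C
  calc jaccardDist A C = #(A ∆ C) / #(A ∪ C) := jaccardDist_eq_card_symmDiff_div A C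
    _ ≤ (#(A ∆ C) + 2 * #(B \ (A ∪ C))) / #U := by
        rw [hU]
        exact div_le_add_two_mul_div_add (by positivity)
          (mod_cast card_le_card symmDiff_subset_union) (by positivity)
    _ ≤ #(A ∆ B) / #U + #(B ∆ C) / #U := by
        rw [← add_div]
        exact div_le_div_of_nonneg_right hnum (by positivity)
    _ ≤ jaccardDist A B + jaccardDist B C :=
        add_le_add (card_symmDiff_div_le_jaccardDist (by grind))
          (card_symmDiff_div_le_jaccardDist (by grind))
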